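/- Let σ be a well-balanced automorphism of a hypergraph H = ⟨N, X, t⟩ with p orbits each of cardinality q, and let i₁,…,i_p be chosen with one node from each orbit. Form the quotient hypergraph H' whose nodes are {1,…,q}, whose arcs are X, and where node m (for m = 1,…,q) is incident to arc x iff some node among σ^{m−1}(i₁),…,σ^{m−1}(i_p) belongs to t(x). Then the pair θ = ⟨θ_N, σ_X⟩, where θ_N is the cyclic permutation 1↦2, 2↦3, …, q↦1, is a well-balanced automorphism of H' generating a single orbit. -/

import Mathlib

set_option autoImplicit true
set_option linter.unusedVariables false

/-! # A formalization of the (asynchronous) π-calculus, following Palamidessi (POPL'97) -/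

/-- Names: a countable set containing the natural numbers. -/
abbrev Name : Type := ℕ

/-- The distinguished output channel `o` to the external world. -/
def oName : Name := 0

/-- The name (a natural number) identifying the `i`-th component of a `k`-node network. -/
def idName {k : ℕ} (i : Fin k) : Name := (i : ℕ) + 1

/-- π-calculus processes.  Guarded sums `Σ αᵢ.Pᵢ` are represented via the empty sum `nil`,
prefixes `inp x y P` (= `x(y).P`), `out x y P` (= `x̄y.P`), `tau P` (= `τ.P`) and
binary sum `choice`.  `res x P` is `νx P`, `par` is parallel composition, `repl P` is `!P`. -/
inductive Proc : Type
  | nil : Proc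
  | inp : Name → Name → Proc → Proc
  | out : Name → Name → Proc → Proc
  | tau : Proc → Proc
  | choice : Proc → Proc → Proc
  | res : Name → Proc → Proc
  | par : Proc → Proc → Proc
  | repl : Proc → Proc

/-- Free names of a process. -/
def fn : Proc → Finset Name
  | .nil => ∅
  | .inp x y P => insert x (fn P \ {y})
  | .out x y P => insert x (insert y (fn P))
  | .tau P => fn P
  | .choice P Q => fn P ∪ fn Q
  | .res x P => fn P \ {x}
  | .par P Q => fn P ∪ fn Q
  | .repl P => fn P

/-- All names (free and bound) occurring in a process. -/
def allNamesP : Proc → Finset Name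
  | .nil => ∅
  | .inp x y P => insert x (insert y (allNamesP P))
  | .out x y P => insert x (insert y (allNamesP P))
  | .tau P => allNamesP P
  | .choice P Q => allNamesP P ∪ allNamesP Q
  | .res x P => insert x (allNamesP P)
  | .par P Q => allNamesP P ∪ allNamesP Q
  | .repl P => allNamesP P

/-- Renaming: apply a function to every name occurring in a process. -/
def rename (f : Name → Name) : Proc → Proc
  | .nil => .nil
  | .inp x y P => .inp (f x) (f y) (rename f P)
  | .out x y P => .out (f x) (f y) (rename f P)
  | .tau P => .tau (rename f P)
  | .choice P Q => .choice (rename f P) (rename f Q)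
  | .res x P => .res (f x) (rename f P)
  | .par P Q => .par (rename f P) (rename f Q)
  | .repl P => .repl (rename f P)

/-- Substitution `P{z/y}` of the name `z` for the free occurrences of the name `y`. -/
def substFree (y z : Name) : Proc → Proc
  | .nil => .nil
  | .inp x w P => .inp (if x = y then z else x) w (if w = y then P else substFree y z P)
  | .out x w P => .out (if x = y then z else x) (if w = y then z else w) (substFree y z P)
  | .tau P => .tau (substFree y z P)
  | .choice P Q => .choice (substFree y z P) (substFree y z Q)
  | .res x P => .res x (if x = y then P else substFree y z P)
  | .par P Q => .par (substFree y z P) (substFree y z Q)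
  | .repl P => .repl (substFree y z P)

/-- The name-swapping function exchanging `y` and `z`. -/
def swapName (y z : Name) : Name → Name :=
  fun n => if n = y then z else if n = z then y else n

/-- Alpha-equivalence `≡α`: renaming of bound names. -/
inductive AlphaEq : Proc → Proc → Prop
  | refl (P : Proc) : AlphaEq P P
  | symm : AlphaEq P Q → AlphaEq Q P
  | trans : AlphaEq P Q → AlphaEq Q R → AlphaEq P R
  | inpAlpha (x y z : Name) (P : Proc) : z ∉ allNamesP P →
      AlphaEq (.inp x y P) (.inp x z (rename (swapName y z) P))
  | resAlpha (y z : Name) (P : Proc) : z ∉ allNamesP P →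
      AlphaEq (.res y P) (.res z (rename (swapName y z) P))
  | inpCong (x y : Name) : AlphaEq P Q → AlphaEq (.inp x y P) (.inp x y Q)
  | outCong (x y : Name) : AlphaEq P Q → AlphaEq (.out x y P) (.out x y Q)
  | tauCong : AlphaEq P Q → AlphaEq (.tau P) (.tau Q)
  | choiceCong : AlphaEq P Q → AlphaEq P' Q' → AlphaEq (.choice P P') (.choice Q Q')
  | resCong (x : Name) : AlphaEq P Q → AlphaEq (.res x P) (.res x Q)
  | parCong : AlphaEq P Q → AlphaEq P' Q' → AlphaEq (.par P P') (.par Q Q')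
  | replCong : AlphaEq P Q → AlphaEq (.repl P) (.repl Q)

/-- Structural congruence `≡`: alpha-conversion, commutativity and associativity of `|`,
and scope extrusion, closed under all contexts. -/
inductive SCong : Proc → Proc → Prop
  | alpha : AlphaEq P Q → SCong P Q
  | symm : SCong P Q → SCong Q P
  | trans : SCong P Q → SCong Q R → SCong P R
  | parComm (P Q : Proc) : SCong (.par P Q) (.par Q P)
  | parAssoc (P Q R : Proc) : SCong (.par (.par P Q) R) (.par P (.par Q R))
  | scopeExt (x : Name) (P Q : Proc) : x ∉ fn Q →
      SCong (.par (.res x P) Q) (.res x (.par P Q))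
  | inpCong (x y : Name) : SCong P Q → SCong (.inp x y P) (.inp x y Q)
  | outCong (x y : Name) : SCong P Q → SCong (.out x y P) (.out x y Q)
  | tauCong : SCong P Q → SCong (.tau P) (.tau Q)
  | choiceCong : SCong P Q → SCong P' Q' → SCong (.choice P P') (.choice Q Q')
  | resCong (x : Name) : SCong P Q → SCong (.res x P) (.res x Q)
  | parCong : SCong P Q → SCong P' Q' → SCong (.par P P') (.par Q Q')
  | replCong : SCong P Q → SCong (.repl P) (.repl Q)

/-- Actions: input `x(y)`, free output `x̄y`, bound output `x̄(y)` and silent action `τ`. -/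
inductive Act : Type
  | inp : Name → Name → Act
  | out : Name → Name → Act
  | bout : Name → Name → Act
  | tau : Act

/-- Bound names of an action. -/
def Act.bn : Act → Finset Name
  | .inp _ y => {y}
  | .out _ _ => ∅
  | .bout _ y => {y}
  | .tau => ∅

/-- All names of an action. -/
def Act.names : Act → Finset Name
  | .inp x y => {x, y}
  | .out x y => {x, y}
  | .bout x y => {x, y}
  | .tau => ∅

/-- Whether an action is a communication action on channel `c`. -/
def Act.onChan (μ : Act) (c : Name) : Prop :=
  match μ with
  | .inp x _ => x = c
  | .out x _ => x = c
  | .bout x _ => x = c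
  | .tau => False

/-- `μ` is an output action (free or bound output). -/
def IsOutputAct (μ : Act) : Prop := ∃ x y, μ = .out x y ∨ μ = .bout x y

/-- `μ` is an input action. -/
def IsInputAct (μ : Act) : Prop := ∃ x y, μ = .inp x y

/-- The early-instantiation labeled transition system of the π-calculus
(rules I-Sum, O/τ-Sum, Open, Res, Par, Com, Close, Rep, Cong). -/
inductive Step : Proc → Act → Proc → Prop
  | inp (x y z : Name) (P : Proc) : Step (.inp x y P) (.inp x z) (substFree y z P)
  | out (x y : Name) (P : Proc) : Step (.out x y P) (.out x y) P
  | tau (P : Proc) : Step (.tau P) .tau P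
  | sumL : Step P μ R → Step (.choice P Q) μ R
  | sumR : Step Q μ R → Step (.choice P Q) μ R
  | open_ (x y : Name) : Step P (.out x y) P' → x ≠ y →
      Step (.res y P) (.bout x y) P'
  | res (y : Name) : Step P μ P' → y ∉ μ.names → Step (.res y P) μ (.res y P')
  | par : Step P μ P' → (∀ z ∈ μ.bn, z ∉ fn Q) → Step (.par P Q) μ (.par P' Q)
  | com (x y : Name) : Step P (.inp x y) P' → Step Q (.out x y) Q' →
      Step (.par P Q) .tau (.par P' Q')
  | close (x y : Name) : Step P (.inp x y) P' → Step Q (.bout x y) Q' →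
      Step (.par P Q) .tau (.res y (.par P' Q'))
  | rep : Step (.par P (.repl P)) μ P' → Step (.repl P) μ P'
  | cong : SCong P P' → Step P' μ Q' → SCong Q' Q → Step P μ Q

/-- The asynchronous π-calculus: `P ::= x̄y | x(y).P | νx P | P|P | !P`. -/
inductive IsAsync : Proc → Prop
  | out (x y : Name) : IsAsync (.out x y .nil)
  | inp (x y : Name) : IsAsync P → IsAsync (.inp x y P)
  | res (x : Name) : IsAsync P → IsAsync (.res x P)
  | par : IsAsync P → IsAsync Q → IsAsync (.par P Q)
  | repl : IsAsync P → IsAsync (.repl P)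

/-- CCS, viewed as the subset of the π-calculus without name passing: inputs do not use
the received name, and outputs carry no (new) name — we represent the CCS output on
channel `x` as `x̄x`, transmitting nothing but the channel itself. -/
inductive IsCCS : Proc → Prop
  | nil : IsCCS .nil
  | inp (x y : Name) : y ∉ fn P → IsCCS P → IsCCS (.inp x y P)
  | out (x : Name) : IsCCS P → IsCCS (.out x x P)
  | tau : IsCCS P → IsCCS (.tau P)
  | choice : IsCCS P → IsCCS Q → IsCCS (.choice P Q)
  | res (x : Name) : IsCCS P → IsCCS (.res x P)
  | par : IsCCS P → IsCCS Q → IsCCS (.par P Q)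
  | repl : IsCCS P → IsCCS (.repl P)

mutual
  /-- The asynchronous π-calculus extended with (separate) input-guarded choice and
  (separate) output-guarded choice, but no mixed choice. -/
  inductive IsAsyncCh : Proc → Prop
    | out (x y : Name) : IsAsyncCh (.out x y .nil)
    | inpSum : IsInpSum P → IsAsyncCh P
    | outSum : IsOutSum P → IsAsyncCh P
    | res (x : Name) : IsAsyncCh P → IsAsyncCh (.res x P)
    | par : IsAsyncCh P → IsAsyncCh Q → IsAsyncCh (.par P Q)
    | repl : IsAsyncCh P → IsAsyncCh (.repl P)

  /-- Input-guarded choices `Σᵢ xᵢ(yᵢ).Pᵢ`. -/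
  inductive IsInpSum : Proc → Prop
    | single (x y : Name) : IsAsyncCh P → IsInpSum (.inp x y P)
    | choice : IsInpSum P → IsInpSum Q → IsInpSum (.choice P Q)

  /-- Output-guarded choices `Σᵢ x̄ᵢyᵢ.Pᵢ`. -/
  inductive IsOutSum : Proc → Prop
    | single (x y : Name) : IsAsyncCh P → IsOutSum (.out x y P)
    | choice : IsOutSum P → IsOutSum Q → IsOutSum (.choice P Q)
end

/-! ## Networks, computations and electoral systems -/

/-- One transition of a network `P₁ | ⋯ | P_k`, recording for each component the action
it contributes (`none` for the idle components); this is the information used by the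
projection of a computation over a component.  Following the paper, the restriction
created by a Close communication between two distinct components is pushed to the top
level of the network and left implicit. -/
inductive NetStep (k : ℕ) :
    (Fin k → Proc) → Act → (Fin k → Proc) → (Fin k → Option Act) → Prop
  | single (s : Fin k → Proc) (i : Fin k) (μ : Act) (P' : Proc)
      (h : Step (s i) μ P')
      (hbn : ∀ j : Fin k, j ≠ i → ∀ y ∈ μ.bn, y ∉ fn (s j)) :
      NetStep k s μ (Function.update s i P')
        (fun j => if j = i then some μ else none)
  | com (s : Fin k → Proc) (i j : Fin k) (hij : i ≠ j) (x y : Name) (Pi' Pj' : Proc)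
      (hi : Step (s i) (.inp x y) Pi') (hj : Step (s j) (.out x y) Pj') :
      NetStep k s .tau (Function.update (Function.update s i Pi') j Pj')
        (fun l => if l = i then some (.inp x y) else if l = j then some (.out x y) else none)
  | close (s : Fin k → Proc) (i j : Fin k) (hij : i ≠ j) (x y : Name) (Pi' Pj' : Proc)
      (hi : Step (s i) (.inp x y) Pi') (hj : Step (s j) (.bout x y) Pj')
      (hfresh : ∀ l : Fin k, l ≠ i → l ≠ j → y ∉ fn (s l)) :
      NetStep k s .tau (Function.update (Function.update s i Pi') j Pj')
        (fun l => if l = i then some (.inp x y) else if l = j then some (.bout x y) else none)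

/-- A (finite or ω-infinite) computation of the network `init = P₁ | ⋯ | P_k`:
`len ∈ ℕ∞` is the number of transitions, `states n` the network after `n` transitions,
`acts n` the action of the `n+1`-th transition and `labels n i` the contribution of
component `i` to that transition (its projection). -/
structure Comp (k : ℕ) (init : Fin k → Proc) where
  len : ℕ∞
  states : ℕ → Fin k → Proc
  acts : ℕ → Act
  labels : ℕ → Fin k → Option Act
  init_eq : states 0 = init
  steps : ∀ n : ℕ, (n : ℕ∞) < len → NetStep k (states n) (acts n) (states (n + 1)) (labels n)

/-- `C'.Extends C` : the computation `C'` extends the computation `C`. -/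
def Comp.Extends {k : ℕ} {init : Fin k → Proc} (C' C : Comp k init) : Prop :=
  C.len ≤ C'.len ∧ (∀ n : ℕ, (n : ℕ∞) ≤ C.len → C'.states n = C.states n) ∧
    ∀ n : ℕ, (n : ℕ∞) < C.len → C'.acts n = C.acts n ∧ C'.labels n = C.labels n

/-- Electoral system: every computation `C` can be extended to a computation `C'` such
that the projection of `C'` over each component contains an output action `ōn` for one
common `n` (the leader), and no extension of `C'` contains any output action `ōm` on the
channel `o` with `m ≠ n`. -/
def Electoral (k : ℕ) (F : Fin k → Proc) : Prop :=
  ∀ C : Comp k F, ∃ C' : Comp k F, C'.Extends C ∧ ∃ n : Fin k,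
    (∀ i : Fin k, ∃ m : ℕ, (m : ℕ∞) < C'.len ∧
      C'.labels m i = some (Act.out oName (idName n))) ∧
    (∀ C'' : Comp k F, C''.Extends C' → ∀ m : ℕ, (m : ℕ∞) < C''.len →
      ∀ (i : Fin k) (v : Name), C''.labels m i = some (Act.out oName v) → v = idName n)

/-- The more permissive notion of electoral system: every computation `C` extends to a
computation `C'` containing one or more actions `ōn` for a single fixed `n`, such that no
extension of `C'` contains an action `ōm` with `m ≠ n`. -/
def ElectoralWeak (k : ℕ) (F : Fin k → Proc) : Prop :=
  ∀ C : Comp k F, ∃ C' : Comp k F, C'.Extends C ∧ ∃ n : Fin k,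
    (∃ m : ℕ, (m : ℕ∞) < C'.len ∧ C'.acts m = Act.out oName (idName n)) ∧
    (∀ C'' : Comp k F, C''.Extends C' → ∀ m : ℕ, (m : ℕ∞) < C''.len →
      ∀ v : Name, C''.acts m = Act.out oName v → v = idName n)

/-- Component `i` is enabled in the network state `s` if it can contribute to some
transition of the network. -/
def ComponentEnabled {k : ℕ} (s : Fin k → Proc) (i : Fin k) : Prop :=
  ∃ (a : Act) (s' : Fin k → Proc) (lab : Fin k → Option Act),
    NetStep k s a s' lab ∧ (lab i).isSome

/-- Fairness for infinite computations: every component which is continuously enabled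
eventually performs a transition. -/
def Comp.FairInf {k : ℕ} {init : Fin k → Proc} (C : Comp k init) : Prop :=
  ∀ (i : Fin k) (m : ℕ), (∀ m' ≥ m, ComponentEnabled (C.states m') i) →
    ∃ m' ≥ m, (C.labels m' i).isSome

/-- A computation is fair if, whenever it is infinite, every continuously enabled
component eventually moves. -/
def Comp.Fair {k : ℕ} {init : Fin k → Proc} (C : Comp k init) : Prop :=
  C.len = (⊤ : ℕ∞) → C.FairInf

/-- Electoral system, with attention restricted to fair computations. -/
def ElectoralFair (k : ℕ) (F : Fin k → Proc) : Prop :=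
  ∀ C : Comp k F, C.Fair → ∃ C' : Comp k F, C'.Extends C ∧ C'.Fair ∧ ∃ n : Fin k,
    (∀ i : Fin k, ∃ m : ℕ, (m : ℕ∞) < C'.len ∧
      C'.labels m i = some (Act.out oName (idName n))) ∧
    (∀ C'' : Comp k F, C''.Extends C' → C''.Fair → ∀ m : ℕ, (m : ℕ∞) < C''.len →
      ∀ (i : Fin k) (v : Name), C''.labels m i = some (Act.out oName v) → v = idName n)

/-! ## Hypergraphs -/

/-! A hypergraph on nodes `N` with hyperarcs `X` is given by its type function
`t : X → Finset N`, assigning to each arc the (finite) set of nodes it connects. -/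

/-- An automorphism of the hypergraph `⟨N, X, t⟩`: a pair of permutations preserving the
type of arcs. -/
structure HAuto {N X : Type*} (t : X → Finset N) where
  σN : Equiv.Perm N
  σX : Equiv.Perm X
  preserves : ∀ x : X, t (σX x) = (t x).map σN.toEmbedding

/-- The identity automorphism. -/
def HAuto.IsId {N X : Type*} {t : X → Finset N} (A : HAuto t) : Prop :=
  A.σN = Equiv.refl N ∧ A.σX = Equiv.refl X

/-- The orbit `O_σ(n) = {n, σ(n), σ²(n), …}` of a node under a permutation. -/
def orbitSet {N : Type*} (σ : Equiv.Perm N) (n : N) : Set N :=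
  {m | ∃ i : ℕ, (σ ^ i) n = m}

/-- A permutation generates a single orbit if some orbit is the whole node set. -/
def singleOrbit {N : Type*} (σ : Equiv.Perm N) : Prop :=
  ∃ n : N, orbitSet σ n = Set.univ

/-- A permutation is well-balanced if all its orbits have the same cardinality. -/
def wellBalanced {N : Type*} (σ : Equiv.Perm N) : Prop :=
  ∀ n m : N, (orbitSet σ n).ncard = (orbitSet σ m).ncard

/-- A hypergraph is connected if every pair of nodes is joined by a sequence of arcs. -/
def HConnected {N X : Type*} (t : X → Finset N) : Prop :=
  ∀ a b : N, Relation.ReflTransGen (fun m n => ∃ x : X, m ∈ t x ∧ n ∈ t x) a b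

/-! ## The hypergraph associated to a network -/

/-- The arcs of the hypergraph associated to a network: the free names of
`P₁ | ⋯ | P_k` other than `o`. -/
def netArcs {k : ℕ} (F : Fin k → Proc) : Finset Name :=
  (Finset.univ.biUnion fun i => fn (F i)).erase oName

/-- The type of arcs of the hypergraph associated to a network. -/
def Arc {k : ℕ} (F : Fin k → Proc) : Type := {x : Name // x ∈ netArcs F}

/-- The type function of the hypergraph `H(P)` associated to a network:
`t(x) = {n | x ∈ fn(Pₙ)}`. -/
def netT {k : ℕ} (F : Fin k → Proc) : Arc F → Finset (Fin k) :=
  fun x => Finset.univ.filter (fun n => x.val ∈ fn (F n))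

/-- The renaming of `Name`s induced by a permutation of the arcs of a network
(the identity on all other names). -/
def extArc {k : ℕ} (F : Fin k → Proc) (σX : Equiv.Perm (Arc F)) : Name → Name :=
  fun n => if h : n ∈ netArcs F then (σX ⟨n, h⟩).val else n

/-- The network `F` is symmetric with respect to the automorphism `A` of its associated
hypergraph: for every node `i`, `P_{σ(i)} ≡α σ(Pᵢ)`. -/
def NetSym {k : ℕ} (F : Fin k → Proc) (A : HAuto (netT F)) : Prop :=
  ∀ i : Fin k, AlphaEq (F (A.σN i)) (rename (extArc F A.σX) (F i))

/-! ## Computations of a single process, traces on the channel `o`, reasonable semantics -/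

/-- A (finite or ω-infinite) computation of a single process. -/
structure PComp (P : Proc) where
  len : ℕ∞
  procs : ℕ → Proc
  acts : ℕ → Act
  init_eq : procs 0 = P
  steps : ∀ n : ℕ, (n : ℕ∞) < len → Step (procs n) (acts n) (procs (n + 1))

open scoped Classical in
/-- The sequence of actions performed on the channel `o` along a computation
(`none` past the end of the sequence). -/
noncomputable def oSeq {P : Proc} (C : PComp P) : ℕ → Option Act := fun n =>
  if {m : ℕ | ((m : ℕ∞) < C.len) ∧ (C.acts m).onChan oName}.Infinite ∨
      n < {m : ℕ | ((m : ℕ∞) < C.len) ∧ (C.acts m).onChan oName}.ncard then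
    some (C.acts (Nat.nth (fun m => ((m : ℕ∞) < C.len) ∧ (C.acts m).onChan oName) n))
  else none

/-- A semantics (an equivalence on processes) is reasonable if it distinguishes two
processes `P` and `Q` whenever in some computation of `P` the actions on the intended
channel `o` are different from those of any computation of `Q`. -/
def Reasonable (Sem : Proc → Proc → Prop) : Prop :=
  ∀ P Q : Proc, (∃ C : PComp P, ∀ C' : PComp Q, oSeq C ≠ oSeq C') → ¬ Sem P Q

/-- The group structure on automorphisms is componentwise composition with the identity
pair as unit. -/
def GroupCompat {N X : Type*} (t : X → Finset N) [G : Group (HAuto t)] : Prop :=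
  (∀ a b : HAuto t, (a * b).σN = a.σN * b.σN ∧ (a * b).σX = a.σX * b.σX) ∧
    (1 : HAuto t).σN = 1 ∧ (1 : HAuto t).σX = 1

open scoped Classical in
/-- The type function of the quotient hypergraph of `⟨N, X, t⟩` by a well-balanced
automorphism with `p` orbits of cardinality `q` and orbit representatives `sel`. -/
noncomputable def quotT {N X : Type*} (t : X → Finset N) (σ : Equiv.Perm N) (q : ℕ)
    {p : ℕ} (sel : Fin p → N) : X → Finset (Fin q) :=
  fun x => Finset.univ.filter (fun m : Fin q => ∃ a : Fin p, (σ ^ (m : ℕ)) (sel a) ∈ t x)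


/-! Every orbit of `σ` has `q` elements, so `σ ^ q` fixes every node and the exponent in
`σ ^ m` only matters modulo `q`. Then `σ ^ (m + 1) = σ * σ ^ m` says precisely that moving
the layer `m` of the quotient to `m + 1` is compatible with `σ_X`, and the rotation of
`Fin q` has the single orbit `Fin q`. -/

theorem Function.mem_periodicPts_of_finite_range_iterate {α : Type*} {f : α → α} {x : α}
    (hf : Function.Injective f) (hx : (Set.range fun n => f^[n] x).Finite) :
    x ∈ Function.periodicPts f := by
  obtain ⟨m, n, heq, hne⟩ : ∃ m n, f^[m] x = f^[n] x ∧ m ≠ n := by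
    by_contra! h
    exact Set.infinite_range_of_injective h hx
  rcases lt_or_gt_of_ne hne with hlt | hlt
  · exact Function.mk_mem_periodicPts (by omega) (Function.iterate_cancel hf heq.symm)
  · exact Function.mk_mem_periodicPts (by omega) (Function.iterate_cancel hf heq)

theorem ncard_orbitSet {N : Type*} (σ : Equiv.Perm N) (n : N) :
    (orbitSet σ n).ncard = Function.minimalPeriod σ n := by
  have hrange : orbitSet σ n = Set.range fun i => σ^[i] n := rfl
  by_cases hper : n ∈ Function.periodicPts σ
  · have hIio : orbitSet σ n = (fun i => σ^[i] n) '' Set.Iio (Function.minimalPeriod σ n) := by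
      refine hrange.trans (Set.Subset.antisymm ?_ (Set.image_subset_range _ _))
      rintro _ ⟨i, rfl⟩
      exact ⟨i % Function.minimalPeriod σ n,
        Nat.mod_lt _ (Function.minimalPeriod_pos_of_mem_periodicPts hper),
        Function.iterate_mod_minimalPeriod_eq⟩
    rw [hIio, Function.iterate_injOn_Iio_minimalPeriod.ncard_image, Set.ncard_Iio_nat]
  -- an infinite orbit: both sides are the junk value `0`
  · have hinf : (orbitSet σ n).Infinite := fun hfin =>
      hper (Function.mem_periodicPts_of_finite_range_iterate σ.injective (hrange ▸ hfin))
    rw [hinf.ncard, Function.minimalPeriod_eq_zero_of_notMem_periodicPts hper]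

theorem pow_eq_one_of_forall_ncard_orbitSet_eq {N : Type*} {σ : Equiv.Perm N} {q : ℕ}
    (h : ∀ n : N, (orbitSet σ n).ncard = q) : σ ^ q = 1 := by
  ext n
  rw [← h n, ncard_orbitSet, ← Equiv.Perm.iterate_eq_pow]
  exact Function.iterate_minimalPeriod

theorem pow_val_finRotate {G : Type*} [Monoid G] {g : G} {q : ℕ} (h : g ^ q = 1) (m : Fin q) :
    g ^ (finRotate q m : ℕ) = g * g ^ (m : ℕ) := by
  obtain ⟨q, rfl⟩ : ∃ q', q = q' + 1 := Nat.exists_eq_add_one_of_ne_zero m.pos.ne'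
  rw [finRotate_apply, Fin.val_add, Fin.val_one', Nat.add_mod_mod, ← pow_eq_pow_mod _ h,
    pow_succ']

theorem quotT_map_of_pow_eq_one {N X : Type*} {t : X → Finset N} (A : HAuto t) {q p : ℕ}
    (sel : Fin p → N) (h : A.σN ^ q = 1) (x : X) :
    quotT t A.σN q sel (A.σX x) = (quotT t A.σN q sel x).map (finRotate q).toEmbedding := by
  ext m
  obtain ⟨m, rfl⟩ := (finRotate q).surjective m
  simp only [quotT, Finset.mem_map_equiv, Equiv.symm_apply_apply, Finset.mem_filter,
    Finset.mem_univ, true_and, A.preserves, pow_val_finRotate h, Equiv.Perm.mul_apply]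

def HAuto.quotient {N X : Type*} {t : X → Finset N} (A : HAuto t) {q p : ℕ}
    (sel : Fin p → N) (h : A.σN ^ q = 1) : HAuto (quotT t A.σN q sel) where
  σN := finRotate q
  σX := A.σX
  preserves := quotT_map_of_pow_eq_one A sel h

theorem orbitSet_finRotate {q : ℕ} (j : Fin q) : orbitSet (finRotate q) j = Set.univ := by
  have := j.neZero
  refine Set.eq_univ_of_forall fun k => ⟨(k - j : Fin q), ?_⟩
  rw [← Equiv.Perm.iterate_eq_pow, ← finCycle_eq_finRotate_iterate, finCycle_apply,
    add_sub_cancel]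

theorem wellBalanced_finRotate (q : ℕ) : wellBalanced (finRotate q) := by
  intro i j
  rw [orbitSet_finRotate, orbitSet_finRotate]

theorem singleOrbit_finRotate {q : ℕ} (hq : 0 < q) : singleOrbit (finRotate q) :=
  ⟨⟨0, hq⟩, orbitSet_finRotate _⟩

/-- quotienting a hypergraph by a well-balanced automorphism with `p`
orbits of cardinality `q` (grouping together, for `m = 1,…,q`, the nodes
`σ^{m-1}(i₁),…,σ^{m-1}(i_p)`) yields a hypergraph on `q` nodes on which the pair formed by
the cyclic permutation of the nodes and `σ_X` is a well-balanced automorphism generating a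
single orbit. -/
theorem quotient_automorphism {N X : Type*} (t : X → Finset N) (A : HAuto t)
    {p : ℕ} (q : ℕ) (hq : 0 < q)
    (hwb : ∀ n : N, (orbitSet A.σN n).ncard = q)
    (sel : Fin p → N)
    (hdisj : ∀ a b : Fin p, a ≠ b → orbitSet A.σN (sel a) ≠ orbitSet A.σN (sel b))
    (hcov : ∀ n : N, ∃ a : Fin p, n ∈ orbitSet A.σN (sel a)) :
    ∃ B : HAuto (quotT t A.σN q sel),
      B.σN = finRotate q ∧ B.σX = A.σX ∧ wellBalanced B.σN ∧ singleOrbit B.σN :=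
  ⟨A.quotient sel (pow_eq_one_of_forall_ncard_orbitSet_eq hwb), rfl, rfl,
    wellBalanced_finRotate q, singleOrbit_finRotate hq⟩
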